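/- In a finite solvable group whose prime graph contains three pairwise non-adjacent vertices, we reach a contradiction; equivalently: for a finite solvable group G, there do not exist three distinct primes p, q, r dividing |G| such that G has no element of order pq, no element of order pr, and no element of order qr. -/

import Mathlib

/-!
Induction on `|G|`. A nontrivial solvable group has a nontrivial normal elementary abelian
`u`-subgroup `M`. If `u ∉ {p, q, r}`, the three primes still divide `|G ⧸ M|`, and element orders
lift from `G ⧸ M` to `G`. Otherwise, say `u = p`; the same induction, with Schur–Zassenhaus to
lift subgroups from `G ⧸ M`, yields `A ≤ G` of order `qr`, or elementary abelian of order `q²`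
or `r²`. If `G` had no elements of order `pq`, `pr`, `qr`, every `a ∈ A \ {1}` would have order
`q` or `r` and would centralize no nontrivial element of `M`. For `v ∈ M` the norm
`∏_{a ∈ A} a v a⁻¹` is then fixed by `A`, hence trivial; splitting `A \ {1}` along the `k`
subgroups of prime order of `A`, each contributing `v⁻¹`, gives `v ^ (k - 1) = 1`. Counting
elements (with Sylow's theorem when `|A| = qr`) shows `k - 1 ∈ {q, r}`, impossible for `v ≠ 1`
of order `p`.
-/

open Finset Subgroup
open scoped Pointwise

section ElementaryAbelianNormal

variable {G : Type*} [Group G]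

theorem Group.IsSolvable.exists_normal_isMulCommutative [Group.IsSolvable G] [Nontrivial G] :
    ∃ D : Subgroup G, D.Normal ∧ D ≠ ⊥ ∧ IsMulCommutative D := by
  classical
  have hex : ∃ n, derivedSeries G n = ⊥ := Group.IsSolvable.solvable
  obtain ⟨k, hk⟩ : ∃ k, Nat.find hex = k + 1 := by
    refine Nat.exists_eq_add_one.mpr (Nat.pos_of_ne_zero fun h => ?_)
    have h0 := Nat.find_spec hex
    rw [h, derivedSeries_zero] at h0
    exact top_ne_bot h0
  refine ⟨derivedSeries G k, derivedSeries_normal G k, Nat.find_min hex (by omega), ?_⟩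
  rw [← le_centralizer_iff_isMulCommutative, ← commutator_eq_bot_iff_le_centralizer,
    ← derivedSeries_succ, ← hk]
  exact Nat.find_spec hex

namespace Subgroup

def torsionBy (D : Subgroup G) [IsMulCommutative D] (n : ℕ) : Subgroup G where
  carrier := {x | x ∈ D ∧ x ^ n = 1}
  one_mem' := ⟨D.one_mem, one_pow n⟩
  mul_mem' := fun ⟨hx, hxn⟩ ⟨hy, hyn⟩ =>
    ⟨D.mul_mem hx hy, by rw [Commute.mul_pow (setLike_mul_comm hx hy), hxn, hyn, one_mul]⟩
  inv_mem' := fun ⟨hx, hxn⟩ => ⟨D.inv_mem hx, by rw [inv_pow, hxn, inv_one]⟩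

variable (D : Subgroup G) [IsMulCommutative D] (n : ℕ)

theorem torsionBy_le : D.torsionBy n ≤ D := fun _ hx => hx.1

instance : IsMulCommutative (D.torsionBy n) :=
  le_centralizer_iff_isMulCommutative.mp <| (torsionBy_le D n).trans <|
    (le_centralizer_iff_isMulCommutative.mpr ‹_›).trans (centralizer_le (torsionBy_le D n))

instance [hD : D.Normal] : (D.torsionBy n).Normal :=
  ⟨fun x hx g => ⟨hD.conj_mem x hx.1 g, by rw [conj_pow, hx.2, mul_one, mul_inv_cancel]⟩⟩

theorem torsionBy_ne_bot [Finite D] {u : ℕ} (hu : u.Prime) (hdvd : u ∣ Nat.card D) :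
    D.torsionBy u ≠ ⊥ := by
  have : Fact u.Prime := ⟨hu⟩
  obtain ⟨x, hx⟩ := exists_prime_orderOf_dvd_card' u hdvd
  intro h
  have hx1 : (x : G) = 1 := (eq_bot_iff_forall _).mp h x
    ⟨x.2, by rw [← hx, ← D.coe_pow, pow_orderOf_eq_one, D.coe_one]⟩
  exact hu.ne_one (hx ▸ orderOf_eq_one_iff.mpr (Subtype.ext hx1))

end Subgroup

variable (G) in
theorem Group.IsSolvable.exists_elementary_abelian_normal [Finite G] [Group.IsSolvable G]
    [Nontrivial G] : ∃ (u : ℕ) (M : Subgroup G), u.Prime ∧ M.Normal ∧ M ≠ ⊥ ∧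
      IsMulCommutative M ∧ ∀ x ∈ M, x ^ u = 1 := by
  obtain ⟨D, hDn, hDbot, hDc⟩ := Group.IsSolvable.exists_normal_isMulCommutative (G := G)
  obtain ⟨u, hu, hud⟩ := Nat.exists_prime_and_dvd ((one_lt_card_iff_ne_bot D).mpr hDbot).ne'
  exact ⟨u, D.torsionBy u, hu, inferInstance, D.torsionBy_ne_bot hu hud, inferInstance,
    fun _ hx => hx.2⟩

end ElementaryAbelianNormal

section Quotients

variable {G : Type*} [Group G]

theorem Subgroup.dvd_of_prime_dvd_card {M : Subgroup G} [Finite M] {n s : ℕ}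
    (hM : ∀ x ∈ M, x ^ n = 1) (hs : s.Prime) (hsM : s ∣ Nat.card M) : s ∣ n := by
  have : Fact s.Prime := ⟨hs⟩
  obtain ⟨x, hx⟩ := exists_prime_orderOf_dvd_card' s hsM
  rw [← hx, ← orderOf_coe]
  exact orderOf_dvd_of_pow_eq_one (hM x x.2)

theorem prime_dvd_card_quotient [Finite G] {M : Subgroup G} {n s : ℕ}
    (hM : ∀ x ∈ M, x ^ n = 1) (hs : s.Prime) (hsn : ¬s ∣ n) (hsG : s ∣ Nat.card G) :
    s ∣ Nat.card (G ⧸ M) :=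
  (hs.dvd_mul.mp (M.card_eq_card_quotient_mul_card_subgroup ▸ hsG)).resolve_right
    fun h => hsn (M.dvd_of_prime_dvd_card hM hs h)

theorem card_quotient_lt [Finite G] {M : Subgroup G} (hM : M ≠ ⊥) :
    Nat.card (G ⧸ M) < Nat.card G := by
  rw [M.card_eq_card_quotient_mul_card_subgroup]
  exact lt_mul_of_one_lt_right Nat.card_pos ((one_lt_card_iff_ne_bot M).mpr hM)

theorem exists_orderOf_eq_of_surjective {H : Type*} [Group H] [Finite G] {f : G →* H}
    (hf : Function.Surjective f) (y : H) : ∃ x : G, orderOf x = orderOf y := by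
  obtain ⟨x, rfl⟩ := hf y
  exact ⟨x ^ (orderOf x / orderOf (f x)),
    orderOf_pow_orderOf_div (orderOf_pos x).ne' (orderOf_map_dvd f x)⟩

theorem exists_subgroup_mulEquiv_of_coprime {M : Subgroup G} [M.Normal] (B : Subgroup (G ⧸ M))
    (hcop : (Nat.card M).Coprime (Nat.card B)) : ∃ K : Subgroup G, Nonempty (K ≃* B) := by
  set A := B.comap (QuotientGroup.mk' M)
  let φ : A →* B := ((QuotientGroup.mk' M).comp A.subtype).codRestrict B fun x => x.2
  have hφ : Function.Surjective φ := fun b => by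
    obtain ⟨g, hg⟩ := QuotientGroup.mk'_surjective M b
    exact ⟨⟨g, show QuotientGroup.mk' M g ∈ B from hg ▸ b.2⟩, Subtype.ext hg⟩
  have hker : φ.ker = M.subgroupOf A := by
    ext x
    rw [MonoidHom.mem_ker, mem_subgroupOf, ← QuotientGroup.eq_one_iff, ← Subtype.val_inj]
    rfl
  have hMA : M ≤ A := fun x hx => by simp [A, (QuotientGroup.eq_one_iff x).mpr hx]
  have hcop' : (Nat.card φ.ker).Coprime φ.ker.index := by
    rwa [index_ker, MonoidHom.range_eq_top.mpr hφ, card_top, hker,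
      Nat.card_congr (subgroupOfEquivOfLe hMA).toEquiv]
  obtain ⟨K, hK⟩ := exists_right_complement'_of_coprime hcop'
  exact ⟨K.map A.subtype, ⟨(K.equivMapOfInjective A.subtype A.subtype_injective).symm.trans <|
    hK.symm.QuotientMulEquiv.symm.trans (QuotientGroup.quotientKerEquivOfSurjective φ hφ)⟩⟩

end Quotients

section SubgroupsOfOrderQR

variable {G : Type*} [Group G] [Finite G] {q r : ℕ}

theorem exists_subgroup_card_mul_or_sq_of_normal (hq : q.Prime) (hr : r.Prime) (hqr : q ≠ r)
    {M : Subgroup G} [M.Normal] (hMbot : M ≠ ⊥) (hM : ∀ x ∈ M, x ^ q = 1)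
    (hrd : r ∣ Nat.card G) :
    ∃ A : Subgroup G, Nat.card A = q * r ∨ (Nat.card A = q ^ 2 ∧ ∀ a : A, a ^ q = 1) := by
  have : Fact q.Prime := ⟨hq⟩
  have : Fact r.Prime := ⟨hr⟩
  obtain ⟨k, hk⟩ := IsPGroup.exists_card_eq (p := q) (G := M)
    fun x => ⟨1, Subtype.ext (by simpa using hM x x.2)⟩
  have hk0 : k ≠ 0 := by
    rintro rfl
    exact hMbot (card_eq_one.mp (by simpa using hk))
  by_cases hk1 : k = 1
  · rw [hk1, pow_one] at hk
    obtain ⟨y, hy⟩ := exists_prime_orderOf_dvd_card' r hrd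
    refine ⟨M ⊔ zpowers y, Or.inl (le_antisymm ?_ (Nat.le_of_dvd Nat.card_pos ?_))⟩
    · calc Nat.card ↥(M ⊔ zpowers y) = Nat.card ((M : Set G) * (zpowers y : Set G)) := by
            rw [← normal_mul]; rfl
        _ ≤ Nat.card M * Nat.card (zpowers y) := Set.natCard_mul_le
        _ = q * r := by rw [hk, Nat.card_zpowers, hy]
    · refine Nat.Coprime.mul_dvd_of_dvd_of_dvd ((Nat.coprime_primes hq hr).mpr hqr) ?_ ?_
      · exact hk ▸ card_dvd_of_le le_sup_left
      · exact hy ▸ Nat.card_zpowers y ▸ card_dvd_of_le le_sup_right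
  · obtain ⟨A, hA⟩ := Sylow.exists_subgroup_card_pow_prime (G := M) q (n := 2)
      (hk ▸ pow_dvd_pow q (by omega))
    refine ⟨A.map M.subtype,
      Or.inr ⟨(card_map_of_injective M.subtype_injective).trans hA, ?_⟩⟩
    rintro ⟨_, x, -, rfl⟩
    exact Subtype.ext (hM x x.2)

theorem Group.IsSolvable.exists_subgroup_card_mul_or_sq [Group.IsSolvable G] (hq : q.Prime)
    (hr : r.Prime) (hqr : q ≠ r) (hqd : q ∣ Nat.card G) (hrd : r ∣ Nat.card G) :
    ∃ A : Subgroup G, Nat.card A = q * r ∨ (Nat.card A = q ^ 2 ∧ ∀ a : A, a ^ q = 1) ∨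
      (Nat.card A = r ^ 2 ∧ ∀ a : A, a ^ r = 1) := by
  induction hn : Nat.card G using Nat.strong_induction_on generalizing G with
  | _ n ih =>
  have : Nontrivial G :=
    Finite.one_lt_card_iff_nontrivial.mp (hq.one_lt.trans_le (Nat.le_of_dvd Nat.card_pos hqd))
  obtain ⟨u, M, hu, hMn, hMbot, -, hM⟩ := exists_elementary_abelian_normal G
  by_cases huq : u = q
  · subst huq
    obtain ⟨A, hA⟩ := exists_subgroup_card_mul_or_sq_of_normal hu hr hqr hMbot hM hrd
    exact ⟨A, hA.imp_right Or.inl⟩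
  by_cases hur : u = r
  · subst hur
    obtain ⟨A, hA⟩ := exists_subgroup_card_mul_or_sq_of_normal hu hq (Ne.symm hqr) hMbot hM hqd
    exact ⟨A, hA.imp (·.trans (mul_comm u q)) Or.inr⟩
  have hqu : ¬q ∣ u := (Nat.prime_dvd_prime_iff_eq hq hu).not.mpr (Ne.symm huq)
  have hru : ¬r ∣ u := (Nat.prime_dvd_prime_iff_eq hr hu).not.mpr (Ne.symm hur)
  obtain ⟨B, hB⟩ := ih _ (hn ▸ card_quotient_lt hMbot) (prime_dvd_card_quotient hM hq hqu hqd)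
    (prime_dvd_card_quotient hM hr hru hrd) rfl
  have hcop : (Nat.card M).Coprime (Nat.card B) := Nat.coprime_of_dvd fun s hs hsM hsB => by
    have hsu := (Nat.prime_dvd_prime_iff_eq hs hu).mp (M.dvd_of_prime_dvd_card hM hs hsM)
    have hsqr : s ∣ q ∨ s ∣ r := by
      rcases hB with h | ⟨h, -⟩ | ⟨h, -⟩ <;> rw [h] at hsB
      exacts [hs.dvd_mul.mp hsB, .inl (hs.dvd_of_dvd_pow hsB), .inr (hs.dvd_of_dvd_pow hsB)]
    rcases hsqr with h | h
    · exact huq (hsu ▸ (Nat.prime_dvd_prime_iff_eq hs hq).mp h)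
    · exact hur (hsu ▸ (Nat.prime_dvd_prime_iff_eq hs hr).mp h)
  obtain ⟨K, ⟨e⟩⟩ := exists_subgroup_mulEquiv_of_coprime B hcop
  have hcard : Nat.card K = Nat.card B := Nat.card_congr e.toEquiv
  have hexp (m : ℕ) (h : ∀ b : B, b ^ m = 1) (a : K) : a ^ m = 1 :=
    e.injective (by rw [map_pow, h, map_one])
  exact ⟨K, hcard ▸ hB.imp_right (Or.imp (And.imp_right (hexp q)) (And.imp_right (hexp r)))⟩

end SubgroupsOfOrderQR

section PrimeOrderSubgroups

open scoped Classical

variable {A : Type*} [Group A]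

theorem zpowers_eq_of_mem_of_card_prime {C : Subgroup A} (hC : (Nat.card C).Prime) {x : A}
    (hxC : x ∈ C) (hx : x ≠ 1) : zpowers x = C := by
  have : Finite C := Nat.finite_of_card_ne_zero hC.ne_zero
  have hle : zpowers x ≤ C := zpowers_le.mpr hxC
  refine eq_of_le_of_card_ge hle ?_
  rcases (Nat.dvd_prime hC).mp (card_dvd_of_le hle) with h | h
  · exact absurd (orderOf_eq_one_iff.mp (Nat.card_zpowers x ▸ h)) hx
  · exact h.ge

theorem orderOf_eq_or_eq_of_card_eq_mul {q r : ℕ} (hq : q.Prime) (hr : r.Prime)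
    (hcard : Nat.card A = q * r) (hcyc : ∀ a : A, orderOf a ≠ q * r) {a : A} (ha : a ≠ 1) :
    orderOf a = q ∨ orderOf a = r := by
  obtain ⟨d, e, hd, he, hde⟩ := Nat.dvd_mul.mp (hcard ▸ orderOf_dvd_natCard a)
  rcases (Nat.dvd_prime hq).mp hd with rfl | rfl <;>
    rcases (Nat.dvd_prime hr).mp he with rfl | rfl
  · exact absurd (orderOf_eq_one_iff.mp (by simpa using hde.symm)) ha
  · exact Or.inr (by simpa using hde.symm)
  · exact Or.inl (by simpa using hde.symm)
  · exact absurd hde.symm (hcyc a)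

variable [Fintype A]

theorem card_subgroups_card_eq_prime_dvd {s m : ℕ} (hs : s.Prime) (hcard : Nat.card A = s * m)
    (hsm : ¬s ∣ m) : #{C : Subgroup A | Nat.card C = s} ∣ m := by
  have : Fact s.Prime := ⟨hs⟩
  have hfac : (Nat.card A).factorization s = 1 := by
    rw [hcard, Nat.factorization_mul hs.ne_zero (by rintro rfl; exact hsm (dvd_zero s)),
      Finsupp.add_apply, hs.factorization_self, Nat.factorization_eq_zero_of_not_dvd hsm]
  have hsylow : Nat.card (Sylow s A) = #{C : Subgroup A | Nat.card C = s} := by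
    rw [← Fintype.card_subtype, ← Nat.card_eq_fintype_card]
    exact Nat.card_congr
      { toFun := fun P => ⟨P, by rw [P.card_eq_multiplicity, hfac, pow_one]⟩
        invFun := fun C => Sylow.ofCard C.1 (by rw [C.2, hfac, pow_one])
        left_inv := fun P => Sylow.ext rfl
        right_inv := fun C => rfl }
  obtain ⟨P⟩ : Nonempty (Sylow s A) := inferInstance
  have hindex : (P : Subgroup A).index = m := by
    have h := P.card_mul_index
    rw [P.card_eq_multiplicity, hfac, pow_one, hcard] at h
    exact Nat.eq_of_mul_eq_mul_left hs.pos h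
  exact hsylow ▸ hindex ▸ P.card_dvd_index

variable (A) in
noncomputable def primeOrderSubgroups : Finset (Subgroup A) := {C | (Nat.card C).Prime}

theorem mem_primeOrderSubgroups {C : Subgroup A} :
    C ∈ primeOrderSubgroups A ↔ (Nat.card C).Prime :=
  mem_filter_univ _

theorem zpowers_mem_primeOrderSubgroups (hA : ∀ a : A, a ≠ 1 → (orderOf a).Prime) {x : A}
    (hx : x ∈ univ.erase 1) : zpowers x ∈ primeOrderSubgroups A :=
  mem_primeOrderSubgroups.mpr <| (Nat.card_zpowers x).symm ▸ hA x (ne_of_mem_erase hx)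

theorem filter_zpowers_eq_erase {C : Subgroup A} (hC : (Nat.card C).Prime) :
    {x ∈ univ.erase (1 : A) | zpowers x = C} = ({x | x ∈ C} : Finset A).erase 1 := by
  ext x
  simp only [mem_filter, mem_erase, mem_univ, and_true, true_and]
  constructor
  · rintro ⟨hx, rfl⟩
    exact ⟨hx, mem_zpowers x⟩
  · rintro ⟨hx, hxC⟩
    exact ⟨hx, zpowers_eq_of_mem_of_card_prime hC hxC hx⟩

theorem card_eq_one_add_sum_primeOrderSubgroups (hA : ∀ a : A, a ≠ 1 → (orderOf a).Prime) :
    Nat.card A = 1 + ∑ C ∈ primeOrderSubgroups A, (Nat.card C - 1) := by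
  rw [Nat.card_eq_fintype_card, ← card_univ, ← card_erase_add_one (mem_univ 1), add_comm,
    card_eq_sum_card_fiberwise fun x hx => zpowers_mem_primeOrderSubgroups hA hx]
  congr 1
  refine sum_congr rfl fun C hC => ?_
  rw [filter_zpowers_eq_erase (mem_primeOrderSubgroups.mp hC),
    card_erase_of_mem ((mem_filter_univ _).mpr C.one_mem), ← Fintype.card_subtype,
    Nat.card_eq_fintype_card]

theorem card_primeOrderSubgroups_of_card_eq_sq {q : ℕ} (hq : q.Prime)
    (hcard : Nat.card A = q ^ 2) (hexp : ∀ a : A, a ^ q = 1) :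
    #(primeOrderSubgroups A) = q + 1 := by
  have : Fact q.Prime := ⟨hq⟩
  have hcount := card_eq_one_add_sum_primeOrderSubgroups fun a ha =>
    orderOf_eq_prime (hexp a) ha ▸ hq
  have hC : ∀ C ∈ primeOrderSubgroups A, Nat.card C - 1 = q - 1 := fun C hC => by
    have hC := mem_primeOrderSubgroups.mp hC
    rw [(Nat.prime_dvd_prime_iff_eq hC hq).mp
      (hC.dvd_of_dvd_pow (hcard ▸ C.card_subgroup_dvd_card))]
  rw [sum_const_nat hC, hcard] at hcount
  obtain ⟨m, rfl⟩ : ∃ m, q = m + 2 := ⟨q - 2, by have := hq.two_le; omega⟩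
  rw [show m + 2 - 1 = m + 1 by omega] at hcount
  nlinarith

theorem card_primeOrderSubgroups_of_card_eq_mul {q r : ℕ} (hq : q.Prime) (hr : r.Prime)
    (hqr : q ≠ r) (hcard : Nat.card A = q * r) (hcyc : ∀ a : A, orderOf a ≠ q * r) :
    #(primeOrderSubgroups A) = q + 1 ∨ #(primeOrderSubgroups A) = r + 1 := by
  set Tq : Finset (Subgroup A) := {C | Nat.card C = q}
  set Tr : Finset (Subgroup A) := {C | Nat.card C = r}
  have hT : primeOrderSubgroups A = Tq ∪ Tr := by
    ext C
    simp only [Tq, Tr, mem_primeOrderSubgroups, mem_union, mem_filter_univ]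
    refine ⟨fun hC => ?_, by rintro (h | h) <;> rw [h] <;> assumption⟩
    exact (hC.dvd_mul.mp (hcard ▸ C.card_subgroup_dvd_card)).imp
      (Nat.prime_dvd_prime_iff_eq hC hq).mp (Nat.prime_dvd_prime_iff_eq hC hr).mp
  have hdisj : Disjoint Tq Tr := disjoint_filter.mpr fun C _ hCq hCr => hqr (hCq.symm.trans hCr)
  have hcount := card_eq_one_add_sum_primeOrderSubgroups fun a ha =>
    (orderOf_eq_or_eq_of_card_eq_mul hq hr hcard hcyc ha).elim (· ▸ hq) (· ▸ hr)
  rw [hT, sum_union hdisj, sum_const_nat fun C hC => by rw [(mem_filter_univ C).mp hC],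
    sum_const_nat fun C hC => by rw [(mem_filter_univ C).mp hC], hcard] at hcount
  rw [hT, card_union_of_disjoint hdisj]
  have hnq : #Tq ∣ r := card_subgroups_card_eq_prime_dvd hq hcard
    ((Nat.prime_dvd_prime_iff_eq hq hr).not.mpr hqr)
  have hnr : #Tr ∣ q := card_subgroups_card_eq_prime_dvd hr (hcard.trans (mul_comm q r))
    ((Nat.prime_dvd_prime_iff_eq hr hq).not.mpr hqr.symm)
  obtain ⟨m, rfl⟩ : ∃ m, q = m + 2 := ⟨q - 2, by have := hq.two_le; omega⟩
  obtain ⟨n, rfl⟩ : ∃ n, r = n + 2 := ⟨r - 2, by have := hr.two_le; omega⟩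
  rw [show m + 2 - 1 = m + 1 by omega, show n + 2 - 1 = n + 1 by omega] at hcount
  -- `#Tq ∈ {1, r}` and `#Tr ∈ {1, q}`; the count `qr = 1 + #Tq (q - 1) + #Tr (r - 1)` rules
  -- out `(1, 1)` and `(r, q)`, since both would force `(q - 1) (r - 1) = 0`.
  rcases (Nat.dvd_prime hr).mp hnq with h1 | h1 <;>
    rcases (Nat.dvd_prime hq).mp hnr with h2 | h2 <;> rw [h1, h2] at hcount ⊢
  · nlinarith
  · omega
  · omega
  · nlinarith

end PrimeOrderSubgroups

section FixedPointFreeAction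

open scoped Classical

variable {A N : Type*} [Group A] [Fintype A] [CommGroup N] [MulDistribMulAction A N]

theorem prod_smul_eq_one_of_fixedPointFree {a : A} (ha : ∀ v : N, a • v = v → v = 1) (v : N) :
    ∏ x : A, x • v = 1 := by
  apply ha
  rw [Finset.smul_prod']
  exact Fintype.prod_equiv (Equiv.mulLeft a) _ _ fun x => (mul_smul a x v).symm

theorem prod_filter_zpowers_smul_eq_inv {C : Subgroup A} (hC : (Nat.card C).Prime)
    (hfree : ∀ a : A, a ≠ 1 → ∀ v : N, a • v = v → v = 1) (v : N) :
    ∏ x ∈ univ.erase 1 with zpowers x = C, x • v = v⁻¹ := by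
  have : Nontrivial C := Finite.one_lt_card_iff_nontrivial.mp hC.one_lt
  obtain ⟨a, ha⟩ := exists_ne (1 : C)
  have hC1 : ∏ x with x ∈ C, x • v = 1 := by
    rw [prod_subtype _ fun _ => mem_filter_univ _]
    exact prod_smul_eq_one_of_fixedPointFree (A := C) (hfree a (by simpa using ha)) v
  rw [filter_zpowers_eq_erase hC, ← mul_eq_one_iff_eq_inv', ← hC1,
    ← mul_prod_erase _ _ ((mem_filter_univ _).mpr C.one_mem), one_smul]

theorem pow_card_primeOrderSubgroups [Nontrivial A] (hA : ∀ a : A, a ≠ 1 → (orderOf a).Prime)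
    (hfree : ∀ a : A, a ≠ 1 → ∀ v : N, a • v = v → v = 1) (v : N) :
    v ^ #(primeOrderSubgroups A) = v := by
  obtain ⟨a, ha⟩ := exists_ne (1 : A)
  have h := prod_smul_eq_one_of_fixedPointFree (hfree a ha) v
  -- `A \ {1}` is the disjoint union of the sets `C \ {1}`, each contributing `v⁻¹`.
  rw [← mul_prod_erase _ _ (mem_univ 1), one_smul,
    ← prod_fiberwise_of_maps_to fun x hx => zpowers_mem_primeOrderSubgroups hA hx,
    prod_congr rfl fun C hC =>
      prod_filter_zpowers_smul_eq_inv (mem_primeOrderSubgroups.mp hC) hfree v,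
    prod_const, inv_pow, mul_inv_eq_one] at h
  exact h.symm

theorem exists_smul_eq_self_of_card_mul_or_sq [Nontrivial N] {t q r : ℕ} (ht : t.Prime)
    (hq : q.Prime) (hr : r.Prime) (htq : t ≠ q) (htr : t ≠ r) (hqr : q ≠ r)
    (hN : ∀ v : N, v ^ t = 1)
    (hA : (Nat.card A = q * r ∧ ∀ a : A, orderOf a ≠ q * r) ∨
      (Nat.card A = q ^ 2 ∧ ∀ a : A, a ^ q = 1) ∨
      (Nat.card A = r ^ 2 ∧ ∀ a : A, a ^ r = 1)) :
    ∃ a : A, (orderOf a = q ∨ orderOf a = r) ∧ ∃ v : N, v ≠ 1 ∧ a • v = v := by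
  have : Fact t.Prime := ⟨ht⟩
  have : Fact q.Prime := ⟨hq⟩
  have : Fact r.Prime := ⟨hr⟩
  obtain ⟨hA1, hord, hk⟩ : 1 < Nat.card A ∧
      (∀ a : A, a ≠ 1 → orderOf a = q ∨ orderOf a = r) ∧
      (#(primeOrderSubgroups A) = q + 1 ∨ #(primeOrderSubgroups A) = r + 1) := by
    rcases hA with ⟨hc, hcyc⟩ | ⟨hc, hexp⟩ | ⟨hc, hexp⟩
    · exact ⟨hc ▸ one_lt_mul hq.one_lt.le hr.one_lt,
        fun a => orderOf_eq_or_eq_of_card_eq_mul hq hr hc hcyc,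
        card_primeOrderSubgroups_of_card_eq_mul hq hr hqr hc hcyc⟩
    · exact ⟨hc ▸ one_lt_pow₀ hq.one_lt two_ne_zero,
        fun a ha => .inl (orderOf_eq_prime (hexp a) ha),
        .inl (card_primeOrderSubgroups_of_card_eq_sq hq hc hexp)⟩
    · exact ⟨hc ▸ one_lt_pow₀ hr.one_lt two_ne_zero,
        fun a ha => .inr (orderOf_eq_prime (hexp a) ha),
        .inr (card_primeOrderSubgroups_of_card_eq_sq hr hc hexp)⟩
  have : Nontrivial A := Finite.one_lt_card_iff_nontrivial.mp hA1
  by_contra! hfree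
  obtain ⟨v, hv⟩ := exists_ne (1 : N)
  have hv' := pow_card_primeOrderSubgroups (fun a ha => (hord a ha).elim (· ▸ hq) (· ▸ hr))
    (fun a ha w hw => by_contra fun hw1 => hfree a (hord a ha) w hw1 hw) v
  have hvt : orderOf v = t := orderOf_eq_prime (hN v) hv
  rcases hk with hk | hk <;> rw [hk, pow_succ, mul_eq_right] at hv'
  · exact htq ((Nat.prime_dvd_prime_iff_eq ht hq).mp (hvt ▸ orderOf_dvd_of_pow_eq_one hv'))
  · exact htr ((Nat.prime_dvd_prime_iff_eq ht hr).mp (hvt ▸ orderOf_dvd_of_pow_eq_one hv'))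

end FixedPointFreeAction

section ThreePrimes

open scoped IsMulCommutative

variable {G : Type*} [Group G] [Finite G] [Group.IsSolvable G] {p q r : ℕ}

theorem exists_orderOf_eq_mul_of_normal (hp : p.Prime) (hq : q.Prime) (hr : r.Prime)
    (hpq : p ≠ q) (hpr : p ≠ r) (hqr : q ≠ r) {N : Subgroup G} [N.Normal] [IsMulCommutative N]
    (hNbot : N ≠ ⊥) (hN : ∀ v ∈ N, v ^ p = 1) (hqd : q ∣ Nat.card G)
    (hrd : r ∣ Nat.card G) :
    ∃ g : G, orderOf g = p * q ∨ orderOf g = p * r ∨ orderOf g = q * r := by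
  by_contra! h
  obtain ⟨A, hA⟩ := Group.IsSolvable.exists_subgroup_card_mul_or_sq hq hr hqr hqd hrd
  let _ : MulDistribMulAction A N :=
    MulDistribMulAction.compHom N ((MulAut.conjNormal (H := N)).comp A.subtype)
  have : Nontrivial N := (nontrivial_iff_ne_bot N).mpr hNbot
  have : Fintype A := Fintype.ofFinite A
  obtain ⟨a, ha, v, hv, hav⟩ := exists_smul_eq_self_of_card_mul_or_sq hp hq hr hpq hpr hqr
    (fun v : N => Subtype.ext (by simpa using hN v v.2))
    (hA.imp_left fun hc => ⟨hc, fun a => orderOf_coe a ▸ (h a).2.2⟩)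
  have hcomm : Commute (a : G) v := mul_inv_eq_iff_eq_mul.mp <|
    MulAut.conjNormal_apply (a : G) v ▸ congrArg Subtype.val hav
  have : Fact p.Prime := ⟨hp⟩
  have hvp : orderOf (v : G) = p := orderOf_eq_prime (hN v v.2) (by simpa using hv)
  rw [← orderOf_coe] at ha
  have hap : (orderOf (a : G)).Coprime p := by
    rcases ha with ha | ha <;> rw [ha]
    exacts [(Nat.coprime_primes hq hp).mpr hpq.symm, (Nat.coprime_primes hr hp).mpr hpr.symm]
  have hmul := hcomm.orderOf_mul_eq_mul_orderOf_of_coprime (hvp ▸ hap)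
  rw [hvp, mul_comm] at hmul
  rcases ha with ha | ha <;> rw [ha] at hmul
  exacts [(h _).1 hmul, (h _).2.1 hmul]

theorem Group.IsSolvable.exists_orderOf_eq_mul (hp : p.Prime) (hq : q.Prime) (hr : r.Prime)
    (hpq : p ≠ q) (hpr : p ≠ r) (hqr : q ≠ r) (hpd : p ∣ Nat.card G)
    (hqd : q ∣ Nat.card G) (hrd : r ∣ Nat.card G) :
    ∃ g : G, orderOf g = p * q ∨ orderOf g = p * r ∨ orderOf g = q * r := by
  induction hn : Nat.card G using Nat.strong_induction_on generalizing G with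
  | _ n ih =>
  have : Nontrivial G :=
    Finite.one_lt_card_iff_nontrivial.mp (hp.one_lt.trans_le (Nat.le_of_dvd Nat.card_pos hpd))
  obtain ⟨u, M, hu, hMn, hMbot, hMc, hM⟩ := exists_elementary_abelian_normal G
  by_cases hup : u = p
  · subst hup
    exact exists_orderOf_eq_mul_of_normal hu hq hr hpq hpr hqr hMbot hM hqd hrd
  by_cases huq : u = q
  · subst huq
    obtain ⟨g, hg⟩ := exists_orderOf_eq_mul_of_normal hu hp hr hpq.symm hqr hpr hMbot hM hpd hrd
    rw [mul_comm u p] at hg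
    exact ⟨g, by tauto⟩
  by_cases hur : u = r
  · subst hur
    obtain ⟨g, hg⟩ :=
      exists_orderOf_eq_mul_of_normal hu hp hq hpr.symm hqr.symm hpq hMbot hM hpd hqd
    rw [mul_comm u p, mul_comm u q] at hg
    exact ⟨g, by tauto⟩
  have hdvd {s : ℕ} (hs : s.Prime) (hsu : s ≠ u) (hsd : s ∣ n) : s ∣ Nat.card (G ⧸ M) :=
    prime_dvd_card_quotient hM hs ((Nat.prime_dvd_prime_iff_eq hs hu).not.mpr hsu) (hn ▸ hsd)
  obtain ⟨y, hy⟩ := ih _ (hn ▸ card_quotient_lt hMbot) (hdvd hp (Ne.symm hup) (hn ▸ hpd))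
    (hdvd hq (Ne.symm huq) (hn ▸ hqd)) (hdvd hr (Ne.symm hur) (hn ▸ hrd)) rfl
  obtain ⟨g, hg⟩ := exists_orderOf_eq_of_surjective (QuotientGroup.mk'_surjective M) y
  exact ⟨g, hg ▸ hy⟩

end ThreePrimes

/-- For a finite solvable group `G`, there do not exist three distinct primes `p`, `q`,
`r` dividing `|G|` such that `G` has no element of order `p*q`, none of order `p*r`, and
none of order `q*r`. -/
theorem stmt_12 {G : Type*} [Group G] [Fintype G] (hsolv : IsSolvable G)
    (p q r : ℕ) (hp : p.Prime) (hq : q.Prime) (hr : r.Prime)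
    (hpq : p ≠ q) (hpr : p ≠ r) (hqr : q ≠ r)
    (hpd : p ∣ Fintype.card G) (hqd : q ∣ Fintype.card G) (hrd : r ∣ Fintype.card G) :
    ¬((¬∃ g : G, orderOf g = p * q) ∧ (¬∃ g : G, orderOf g = p * r) ∧
      (¬∃ g : G, orderOf g = q * r)) := by
  rintro ⟨h1, h2, h3⟩
  have : Group.IsSolvable G := hsolv
  rw [← Nat.card_eq_fintype_card] at hpd hqd hrd
  obtain ⟨g, hg | hg | hg⟩ :=
    Group.IsSolvable.exists_orderOf_eq_mul hp hq hr hpq hpr hqr hpd hqd hrd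
  exacts [h1 ⟨g, hg⟩, h2 ⟨g, hg⟩, h3 ⟨g, hg⟩]
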